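/- arXiv:0707.0111 — 2 statements merged into one kernel-verified Lean document; each statement's English description precedes it below -/
import Mathlib

section
/- Let Ω ⊆ ℂⁿ be an open neighborhood of the closed unit polydisk and φ : Ω → ℝ a continuous plurisubharmonic function. Then for every r ∈ (0, 1), every ε ∈ (0, 1], and every x ∈ Δⁿ with max_i |x_i| ≤ 1 − r, one has V_ε^φ(x) ≤ (π r²)^{−n} · (sup_{z ∈ closed Δⁿ} e^{φ(z)}) · (sup_{z ∈ closed Δⁿ} e^{−φ(z)}). In particular, for every compact K ⊂ Δⁿ there is a constant C_K, independent of ε ∈ (0, 1], with V_ε^φ ≤ C_K on K. -/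
open MeasureTheory Set
open scoped ENNReal NNReal

noncomputable section

def elog (t : ℝ) : EReal := if t ≤ 0 then (⊥ : EReal) else ((Real.log t : ℝ) : EReal)

def erealToENNReal (x : EReal) : ℝ≥0∞ :=
  if x = ⊤ then ⊤ else ENNReal.ofReal x.toReal

def eintegral {α : Type*} [MeasurableSpace α] (μ : Measure α) (u : α → EReal) : EReal :=
  ((∫⁻ x, erealToENNReal (u x) ∂μ : ℝ≥0∞) : EReal)
    - ((∫⁻ x, erealToENNReal (-(u x)) ∂μ : ℝ≥0∞) : EReal)

def circleMean (u : ℝ → EReal) : EReal :=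
  (((2 * Real.pi)⁻¹ : ℝ) : EReal) *
    eintegral (volume.restrict (Set.Ioc (0 : ℝ) (2 * Real.pi))) u

def IsPSHOn {n : ℕ} (Ω : Set (Fin n → ℂ)) (u : (Fin n → ℂ) → EReal) : Prop :=
  UpperSemicontinuousOn u Ω ∧
  ∀ a ∈ Ω, ∀ b : Fin n → ℂ, ∀ r : ℝ, 0 < r →
    (∀ l : ℂ, ‖l‖ ≤ r → a + l • b ∈ Ω) →
    u a ≤ circleMean (fun θ : ℝ =>
      u (a + (((r : ℂ) * Complex.exp (θ * Complex.I)) • b)))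

def openPolydisk (n : ℕ) : Set (Fin n → ℂ) := {z | ∀ i, ‖z i‖ < 1}

def closedPolydisk (n : ℕ) : Set (Fin n → ℂ) := {z | ∀ i, ‖z i‖ ≤ 1}

/-- The class `𝒮_ε(φ)` of normalized competitors: upper semicontinuous
`f : Ω → [0,∞)` with `log f + ε·φ` plurisubharmonic on `Ω` and `∫_{Δⁿ} f dλ ≤ 1`. -/
def Scal {n : ℕ} (Ω : Set (Fin n → ℂ)) (φ : (Fin n → ℂ) → ℝ) (ε : ℝ) :
    Set ((Fin n → ℂ) → ℝ) :=
  {f | (∀ z, 0 ≤ f z) ∧ UpperSemicontinuousOn f Ω ∧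
    IsPSHOn Ω (fun z => elog (f z) + ((ε * φ z : ℝ) : EReal)) ∧
    (∫⁻ z in openPolydisk n, ENNReal.ofReal (f z)) ≤ 1}

/-- The envelope `V_ε^φ(x) = sup{f(x) : f ∈ 𝒮_ε(φ)}`, valued in `[0,∞]`. -/
def Venv {n : ℕ} (Ω : Set (Fin n → ℂ)) (φ : (Fin n → ℂ) → ℝ) (ε : ℝ)
    (x : Fin n → ℂ) : ℝ≥0∞ :=
  ⨆ f ∈ Scal Ω φ ε, ENNReal.ofReal (f x)

/-!
For `f ∈ 𝒮_ε(φ)` put `g = f e^{εφ}`. Since `log g = log f + εφ` is plurisubharmonic, Jensen's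
inequality for `exp` turns the sub-mean-value inequality of `log g` on circles into that of `g`.
Integrating over the radius gives `π r² g(z) ≤ ∫_{|w - z_i| < r} g` in each coordinate, and
iterating over the `n` coordinates gives `(π r²)ⁿ g(x) ≤ ∫_{P(x,r)} g` on the polydisk
`P(x,r) ⊆ Δⁿ`. As `0 < ε ≤ 1`, `e^{ε(φ z - φ x)} ≤ max(1, e^{φ z - φ x}) ≤ sup e^{φ} · sup e^{-φ}`
on the closed polydisk, so `∫_{Δⁿ} f ≤ 1` bounds the right side by
`sup e^{φ} · sup e^{-φ} · e^{εφ(x)}`. A compact subset of `Δⁿ` lies in a polydisk of radius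
`1 - r`.
-/

open Real

theorem UpperSemicontinuousOn.measurable_indicator {α β : Type*} [TopologicalSpace α]
    [MeasurableSpace α] [OpensMeasurableSpace α] [LinearOrder β] [TopologicalSpace β]
    [OrderTopology β] [SecondCountableTopology β] [MeasurableSpace β] [BorelSpace β] [Zero β]
    {f : α → β} {s : Set α} (hf : UpperSemicontinuousOn f s) (hs : MeasurableSet s) :
    Measurable (s.indicator f) := by
  refine measurable_of_Iio fun b => ?_
  obtain ⟨u, hu, hsu⟩ := upperSemicontinuousOn_iff_preimage_Iio.1 hf b
  have : s.indicator f ⁻¹' Iio b = s ∩ u ∪ sᶜ ∩ (fun _ => (0 : β)) ⁻¹' Iio b := by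
    rw [indicator_preimage, Set.ite, ← hsu]
    ext; simp [and_comm]
  rw [this]
  exact (hs.inter hu.measurableSet).union (hs.compl.inter (MeasurableSet.const _))

lemma elog_of_pos {t : ℝ} (ht : 0 < t) : elog t = (Real.log t : EReal) := if_neg ht.not_ge

lemma elog_of_nonpos {t : ℝ} (ht : t ≤ 0) : elog t = ⊥ := if_pos ht

lemma elog_add_coe (t a : ℝ) : elog t + (a : EReal) = elog (t * Real.exp a) := by
  rcases le_or_gt t 0 with ht | ht
  · rw [elog_of_nonpos ht, elog_of_nonpos (mul_nonpos_of_nonpos_of_nonneg ht (exp_pos a).le),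
      EReal.bot_add]
  · rw [elog_of_pos ht, elog_of_pos (mul_pos ht (exp_pos a)), Real.log_mul ht.ne' (exp_pos a).ne',
      Real.log_exp, EReal.coe_add]

lemma erealToENNReal_coe (x : ℝ) : erealToENNReal x = ENNReal.ofReal x := by
  simp [erealToENNReal]

section eintegral

variable {α : Type*} [MeasurableSpace α] {μ : Measure α}

lemma eintegral_congr_ae {u v : α → EReal} (h : u =ᵐ[μ] v) : eintegral μ u = eintegral μ v := by
  unfold eintegral
  rw [lintegral_congr_ae (h.mono fun x hx => congrArg erealToENNReal hx),
    lintegral_congr_ae (h.mono fun x hx => congrArg (fun y => erealToENNReal (-y)) hx)]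

lemma eintegral_coe_of_integrable {u : α → ℝ} (hu : Integrable u μ) :
    eintegral μ (fun x => (u x : EReal)) = ((∫ x, u x ∂μ : ℝ) : EReal) := by
  have hneg : ∫⁻ x, ENNReal.ofReal (-u x) ∂μ < ⊤ := hu.neg.lintegral_lt_top
  simp only [eintegral, erealToENNReal_coe, ← EReal.coe_neg,
    integral_eq_lintegral_pos_part_sub_lintegral_neg_part hu, EReal.coe_sub,
    EReal.coe_ennreal_toReal hu.lintegral_lt_top.ne, EReal.coe_ennreal_toReal hneg.ne]

lemma integrable_of_lintegral_ofReal_ne_top {u : α → ℝ} (hu : AEStronglyMeasurable u μ)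
    (hpos : ∫⁻ x, ENNReal.ofReal (u x) ∂μ ≠ ⊤) (hneg : ∫⁻ x, ENNReal.ofReal (-u x) ∂μ ≠ ⊤) :
    Integrable u μ := by
  refine ⟨hu, ?_⟩
  have hsplit : ∀ x, ‖u x‖ₑ = ENNReal.ofReal (u x) + ENNReal.ofReal (-u x) := fun x => by
    rcases le_total (u x) 0 with h | h
    · simp [enorm_eq_ofReal_abs, abs_of_nonpos h, ENNReal.ofReal_of_nonpos h]
    · simp [enorm_eq_ofReal_abs, abs_of_nonneg h, ENNReal.ofReal_of_nonpos (neg_nonpos.2 h)]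
  rw [HasFiniteIntegral, lintegral_congr hsplit,
    lintegral_add_left' hu.aemeasurable.ennreal_ofReal]
  exact ENNReal.add_lt_top.2 ⟨hpos.lt_top, hneg.lt_top⟩

/-- Where `g ≤ 0` the negative part of `elog g` is `⊤`, so it can only have finite integral if
`g > 0` almost everywhere. -/
lemma ae_pos_of_lintegral_erealToENNReal_neg_elog_ne_top {g : α → ℝ} (hgm : Measurable g)
    (hT : ∫⁻ x, erealToENNReal (-elog (g x)) ∂μ ≠ ⊤) : ∀ᵐ x ∂μ, 0 < g x := by
  have hle : ∫⁻ x, {x | g x ≤ 0}.indicator (fun _ => ⊤) x ∂μ ≤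
      ∫⁻ x, erealToENNReal (-elog (g x)) ∂μ := lintegral_mono fun x => by
    by_cases hx : g x ≤ 0
    · simp [hx, elog_of_nonpos hx, erealToENNReal]
    · simp [hx]
  rw [lintegral_indicator_const (measurableSet_le hgm measurable_const)] at hle
  have hnull : μ {x | g x ≤ 0} = 0 := by
    by_contra h
    exact hT (top_unique (ENNReal.top_mul h ▸ hle))
  exact ae_iff.2 (by simpa only [not_lt] using hnull)

variable [IsFiniteMeasure μ]

/-- Jensen's inequality for `exp`; the tangent line of `exp` at `c` suffices. -/
lemma mul_exp_le_integral_of_mul_le_integral_log {g : α → ℝ} (hg : Integrable g μ)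
    (hlog : Integrable (fun x => Real.log (g x)) μ) (hpos : ∀ᵐ x ∂μ, 0 < g x) {c : ℝ}
    (hc : μ.real univ * c ≤ ∫ x, Real.log (g x) ∂μ) :
    μ.real univ * exp c ≤ ∫ x, g x ∂μ := by
  have htangent : ∀ᵐ x ∂μ, exp c * (1 + (Real.log (g x) - c)) ≤ g x := hpos.mono fun x hx => by
    calc exp c * (1 + (Real.log (g x) - c)) ≤ exp c * exp (Real.log (g x) - c) := by
          gcongr; linarith [add_one_le_exp (Real.log (g x) - c)]
      _ = g x := by rw [← exp_add, add_sub_cancel, exp_log hx]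
  have hlog_sub : Integrable (fun x => Real.log (g x) - c) μ := hlog.sub (integrable_const c)
  have hint : ∫ x, exp c * (1 + (Real.log (g x) - c)) ∂μ =
      exp c * (μ.real univ + (∫ x, Real.log (g x) ∂μ - μ.real univ * c)) := by
    rw [integral_const_mul, integral_add (integrable_const _) hlog_sub,
      integral_sub hlog (integrable_const _), integral_const, integral_const, smul_eq_mul,
      smul_eq_mul, mul_one]
  calc μ.real univ * exp c
      ≤ exp c * (μ.real univ + (∫ x, Real.log (g x) ∂μ - μ.real univ * c)) := by
        nlinarith [exp_pos c]
    _ = ∫ x, exp c * (1 + (Real.log (g x) - c)) ∂μ := hint.symm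
    _ ≤ ∫ x, g x ∂μ :=
        integral_mono_ae (((integrable_const 1).add hlog_sub).const_mul _) hg htangent

lemma ofReal_mul_le_lintegral_of_elog_le_eintegral {g : α → ℝ} (hg0 : ∀ x, 0 ≤ g x)
    (hgm : Measurable g) {t : ℝ}
    (ht : elog t ≤ (((μ.real univ)⁻¹ : ℝ) : EReal) * eintegral μ (fun x => elog (g x))) :
    ENNReal.ofReal (μ.real univ * t) ≤ ∫⁻ x, ENNReal.ofReal (g x) ∂μ := by
  rcases le_or_gt t 0 with ht0 | ht0
  · simp [ENNReal.ofReal_of_nonpos (mul_nonpos_of_nonneg_of_nonpos measureReal_nonneg ht0)]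
  rcases (measureReal_nonneg (μ := μ) (s := univ)).eq_or_lt with hm | hm
  · simp [← hm]
  by_cases hgi : Integrable g μ
  swap
  · rw [not_ne_iff.1 (mt (lintegral_ofReal_ne_top_iff_integrable hgm.aestronglyMeasurable
      (ae_of_all _ hg0)).1 hgi)]
    exact le_top
  have hT : ∫⁻ x, erealToENNReal (-elog (g x)) ∂μ ≠ ⊤ := by
    intro hT
    rw [eintegral, hT, EReal.coe_ennreal_top, EReal.sub_top,
      EReal.coe_mul_bot_of_pos (inv_pos.2 hm), elog_of_pos ht0] at ht
    exact EReal.coe_ne_bot _ (le_bot_iff.1 ht)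
  have hpos := ae_pos_of_lintegral_erealToENNReal_neg_elog_ne_top hgm hT
  have hlog : Integrable (fun x => Real.log (g x)) μ := by
    refine integrable_of_lintegral_ofReal_ne_top hgm.log.aestronglyMeasurable ?_ ?_
    · refine ne_top_of_le_ne_top hgi.lintegral_lt_top.ne (lintegral_mono fun x => ?_)
      exact ENNReal.ofReal_le_ofReal (Real.log_le_self (hg0 x))
    · rwa [lintegral_congr_ae (hpos.mono fun x hx =>
        show ENNReal.ofReal (-Real.log (g x)) = erealToENNReal (-elog (g x)) by
          rw [elog_of_pos hx, ← EReal.coe_neg, erealToENNReal_coe])]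
  rw [eintegral_congr_ae (hpos.mono fun x hx => elog_of_pos hx),
    eintegral_coe_of_integrable hlog, elog_of_pos ht0, ← EReal.coe_mul,
    EReal.coe_le_coe_iff, le_inv_mul_iff₀ hm] at ht
  have hjensen := mul_exp_le_integral_of_mul_le_integral_log hgi hlog hpos ht
  rw [exp_log ht0] at hjensen
  rw [← ofReal_integral_eq_lintegral_ofReal hgi (ae_of_all _ hg0)]
  exact ENNReal.ofReal_le_ofReal hjensen

end eintegral

lemma ofReal_two_pi_mul_le_lintegral_of_elog_le_circleMean {g : ℝ → ℝ} (hg0 : ∀ θ, 0 ≤ g θ)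
    (hgm : Measurable g) {t : ℝ} (ht : elog t ≤ circleMean fun θ => elog (g θ)) :
    ENNReal.ofReal (2 * π * t) ≤ ∫⁻ θ in Ioc 0 (2 * π), ENNReal.ofReal (g θ) := by
  have hμ : (volume.restrict (Ioc 0 (2 * π))).real univ = 2 * π := by
    simp [Real.volume_real_Ioc, pi_pos.le]
  have := ofReal_mul_le_lintegral_of_elog_le_eintegral hg0 hgm (by rwa [hμ])
  rwa [hμ] at this

lemma IsPSHOn.ofReal_two_pi_mul_le_lintegral_circle {n : ℕ} {Ω : Set (Fin n → ℂ)}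
    {F : (Fin n → ℂ) → ℝ} (hF : IsPSHOn Ω fun z => elog (F z)) (hF0 : ∀ z, 0 ≤ F z)
    {a b : Fin n → ℂ} {ρ : ℝ} (hρ : 0 < ρ) (hdisc : ∀ l : ℂ, ‖l‖ ≤ ρ → a + l • b ∈ Ω)
    (hm : Measurable fun θ : ℝ => F (a + ((ρ : ℂ) * Complex.exp (θ * Complex.I)) • b)) :
    ENNReal.ofReal (2 * π * F a) ≤
      ∫⁻ θ in Ioc 0 (2 * π),
        ENNReal.ofReal (F (a + ((ρ : ℂ) * Complex.exp (θ * Complex.I)) • b)) :=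
  ofReal_two_pi_mul_le_lintegral_of_elog_le_circleMean (fun _ => hF0 _) hm
    (hF.2 a (by simpa using hdisc 0 (by simpa using hρ.le)) b ρ hρ hdisc)

lemma add_smul_single_one_eq_update {ι : Type*} [DecidableEq ι] (z : ι → ℂ) (i : ι) (c : ℂ) :
    z + c • Pi.single i (1 : ℂ) = Function.update z i (z i + c) := by
  ext j
  rcases eq_or_ne j i with rfl | hj <;> simp [*]

lemma Function.Periodic.setLIntegral_Ioc_eq {g : ℝ → ℝ≥0∞} {T : ℝ} (hT : 0 < T)
    (hg : Function.Periodic g T) (s t : ℝ) :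
    ∫⁻ x in Ioc s (s + T), g x = ∫⁻ x in Ioc t (t + T), g x := by
  have := Fact.mk hT
  have hs := AddCircle.lintegral_preimage T s hg.lift
  have ht := AddCircle.lintegral_preimage T t hg.lift
  simp only [Function.Periodic.lift_coe] at hs ht
  rw [hs, ht]

lemma Function.Periodic.setLIntegral_Ioo_neg_pi_pi_eq {g : ℝ → ℝ≥0∞}
    (hg : Function.Periodic g (2 * π)) :
    ∫⁻ θ in Ioo (-π) π, g θ = ∫⁻ θ in Ioc 0 (2 * π), g θ := by
  rw [setLIntegral_congr Ioo_ae_eq_Ioc,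
    show Ioc (-π) π = Ioc (-π) (-π + 2 * π) by ring_nf,
    show Ioc 0 (2 * π) = Ioc 0 (0 + 2 * π) by ring_nf]
  exact hg.setLIntegral_Ioc_eq two_pi_pos _ _

lemma setLIntegral_Ioo_zero_ofReal (r : ℝ) (hr : 0 ≤ r) :
    ∫⁻ ρ in Ioo 0 r, ENNReal.ofReal ρ = ENNReal.ofReal (r ^ 2 / 2) := by
  have hint : IntegrableOn (fun ρ : ℝ => ρ) (Ioc 0 r) := continuous_id.integrableOn_Ioc
  rw [setLIntegral_congr Ioo_ae_eq_Ioc, ← ofReal_integral_eq_lintegral_ofReal hint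
    ((ae_restrict_mem measurableSet_Ioc).mono fun ρ hρ => hρ.1.le),
    ← intervalIntegral.integral_of_le hr, integral_id]
  norm_num

theorem ofReal_mul_le_setLIntegral_ball {G : ℂ → ℝ≥0∞} (hG : Measurable G) {w : ℂ} {r : ℝ}
    (hr : 0 ≤ r) (h : ∀ ρ ∈ Ioo 0 r, ENNReal.ofReal (2 * π) * G w ≤
      ∫⁻ θ in Ioc 0 (2 * π), G (w + ρ * Complex.exp (θ * Complex.I))) :
    ENNReal.ofReal (π * r ^ 2) * G w ≤ ∫⁻ z in Metric.ball w r, G z := by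
  set H : ℝ × ℝ → ℝ≥0∞ := fun p =>
    ENNReal.ofReal p.1 * G (w + p.1 * Complex.exp (p.2 * Complex.I))
  have hH : Measurable H := by fun_prop
  have hpolar : ∫⁻ p in Ioo 0 r ×ˢ Ioo (-π) π, H p ≤ ∫⁻ z in Metric.ball w r, G z := by
    rw [← lintegral_indicator measurableSet_ball, ← lintegral_add_left_eq_self _ w,
      ← Complex.lintegral_comp_polarCoord_symm, polarCoord_target]
    refine (setLIntegral_congr_fun (measurableSet_Ioo.prod measurableSet_Ioo) fun p hp => ?_
      ).trans_le (lintegral_mono_set (prod_mono Ioo_subset_Ioi_self subset_rfl))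
    have hpolar : Complex.polarCoord.symm p = p.1 * Complex.exp (p.2 * Complex.I) := by
      rw [Complex.polarCoord_symm_apply, Complex.exp_mul_I, ← Complex.ofReal_cos,
        ← Complex.ofReal_sin]
    have hball : w + Complex.polarCoord.symm p ∈ Metric.ball w r := by
      rw [Metric.mem_ball, dist_self_add_left, Complex.norm_polarCoord_symm, abs_of_pos hp.1.1]
      exact hp.1.2
    rw [indicator_of_mem hball, hpolar, smul_eq_mul]
  calc ENNReal.ofReal (π * r ^ 2) * G w
      = ∫⁻ ρ in Ioo 0 r, ENNReal.ofReal ρ * (ENNReal.ofReal (2 * π) * G w) := by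
        rw [lintegral_mul_const _ (by fun_prop), setLIntegral_Ioo_zero_ofReal r hr, ← mul_assoc,
          ← ENNReal.ofReal_mul (by positivity)]
        ring_nf
    _ ≤ ∫⁻ ρ in Ioo 0 r, ∫⁻ θ in Ioo (-π) π, H (ρ, θ) := by
        refine setLIntegral_mono (by fun_prop) fun ρ hρ => ?_
        show _ ≤ ∫⁻ θ in Ioo (-π) π, ENNReal.ofReal ρ * G (w + ρ * Complex.exp (θ * Complex.I))
        -- Mathlib's polar coordinates take angles in `(-π, π)`, the hypothesis in `(0, 2π]`.
        have hperiodic : Function.Periodic (fun θ : ℝ => G (w + ρ * Complex.exp (θ * Complex.I)))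
            (2 * π) := fun θ => by
          simp only [Complex.ofReal_add, add_mul, Complex.exp_add, Complex.ofReal_mul,
            Complex.ofReal_ofNat, Complex.exp_two_pi_mul_I, mul_one]
        rw [lintegral_const_mul _ (by fun_prop), hperiodic.setLIntegral_Ioo_neg_pi_pi_eq]
        gcongr
        exact h ρ hρ
    _ = ∫⁻ p in Ioo 0 r ×ˢ Ioo (-π) π, H p := by
        rw [Measure.volume_eq_prod, ← Measure.prod_restrict, lintegral_prod _ hH.aemeasurable]
    _ ≤ ∫⁻ z in Metric.ball w r, G z := hpolar

theorem prod_mul_le_setLIntegral_pi {ι : Type*} [Fintype ι] [DecidableEq ι] {X : ι → Type*}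
    [∀ i, MeasurableSpace (X i)] {μ : ∀ i, Measure (X i)} [∀ i, SigmaFinite (μ i)]
    {F : (∀ i, X i) → ℝ≥0∞} (hF : Measurable F) (A : ∀ i, Set (X i)) (c : ι → ℝ≥0∞)
    {x : ∀ i, X i}
    (h : ∀ i z, z i = x i → c i * F z ≤ ∫⁻ t in A i, F (Function.update z i t) ∂μ i) :
    (∏ i, c i) * F x ≤ ∫⁻ z in univ.pi A, F z ∂Measure.pi μ := by
  set ν : ∀ i, Measure (X i) := fun i => (μ i).restrict (A i)
  suffices hmarg : ∀ s : Finset ι, (∏ i ∈ s, c i) * F x ≤ (∫⋯∫⁻_s, F ∂ν) x by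
    rw [Measure.restrict_pi_pi, lintegral_eq_lmarginal_univ x]
    exact hmarg Finset.univ
  intro s
  induction s using Finset.induction_on with
  | empty => simp
  | @insert i s hi ih =>
    rw [Finset.prod_insert hi, mul_assoc, lmarginal_insert' F hF hi]
    calc c i * ((∏ j ∈ s, c j) * F x)
        ≤ c i * (∫⋯∫⁻_s, F ∂ν) x := by gcongr
      _ = ∫⁻ y, c i * F (Function.updateFinset x s y) ∂Measure.pi fun j : s => ν j :=
        (lintegral_const_mul _ (hF.comp measurable_updateFinset)).symm
      _ ≤ _ := lintegral_mono fun y =>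
        h i _ (by simp [Function.updateFinset, hi])

lemma exp_mul_le_max_one_exp {ε : ℝ} (hε0 : 0 ≤ ε) (hε1 : ε ≤ 1) (t : ℝ) :
    exp (ε * t) ≤ max 1 (exp t) := by
  rcases le_total t 0 with ht | ht
  · exact le_max_of_le_left (exp_le_one_iff.2 (mul_nonpos_of_nonneg_of_nonpos hε0 ht))
  · exact le_max_of_le_right (exp_le_exp.2 (mul_le_of_le_one_left ht hε1))

lemma exp_le_sSup_image {X : Type*} [TopologicalSpace X] {K : Set X} (hK : IsCompact K)
    {g : X → ℝ} (hg : ContinuousOn g K) {z : X} (hz : z ∈ K) :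
    exp (g z) ≤ sSup ((fun z => exp (g z)) '' K) :=
  le_csSup (hK.bddAbove_image (continuous_exp.comp_continuousOn hg)) (mem_image_of_mem _ hz)

section Polydisk

variable {n : ℕ}

lemma closedPolydisk_eq_closedBall : closedPolydisk n = Metric.closedBall 0 1 := by
  ext z; simp [closedPolydisk, pi_norm_le_iff_of_nonneg]

lemma openPolydisk_eq_ball : openPolydisk n = Metric.ball 0 1 := by
  ext z; simp [openPolydisk, pi_norm_lt_iff]

lemma openPolydisk_subset_closedPolydisk : openPolydisk n ⊆ closedPolydisk n :=
  fun _ hz i => (hz i).le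

lemma isCompact_closedPolydisk : IsCompact (closedPolydisk n) :=
  closedPolydisk_eq_closedBall ▸ isCompact_closedBall 0 1

lemma update_add_mem_closedPolydisk {z : Fin n → ℂ} (hz : z ∈ closedPolydisk n) {i : Fin n}
    {l : ℂ} (hl : ‖z i‖ + ‖l‖ ≤ 1) : Function.update z i (z i + l) ∈ closedPolydisk n := by
  intro j
  rcases eq_or_ne j i with rfl | hj
  · simpa using (norm_add_le _ _).trans hl
  · simpa [hj] using hz j

lemma exp_mul_le_sSup_mul_sSup_mul_exp {φ : (Fin n → ℂ) → ℝ}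
    (hφ : ContinuousOn φ (closedPolydisk n)) {ε : ℝ} (hε0 : 0 ≤ ε) (hε1 : ε ≤ 1)
    {x z : Fin n → ℂ} (hx : x ∈ closedPolydisk n) (hz : z ∈ closedPolydisk n) :
    exp (ε * φ z) ≤ sSup ((fun z => exp (φ z)) '' closedPolydisk n) *
      sSup ((fun z => exp (-(φ z))) '' closedPolydisk n) * exp (ε * φ x) := by
  set M := sSup ((fun z => exp (φ z)) '' closedPolydisk n)
  set m := sSup ((fun z => exp (-(φ z))) '' closedPolydisk n)
  have hM : ∀ y ∈ closedPolydisk n, exp (φ y) ≤ M := fun y hy =>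
    exp_le_sSup_image isCompact_closedPolydisk hφ hy
  have hm : exp (-(φ x)) ≤ m := exp_le_sSup_image isCompact_closedPolydisk hφ.neg hx
  have hone : 1 ≤ M * m := by
    calc (1 : ℝ) = exp (φ x) * exp (-(φ x)) := by rw [← exp_add, add_neg_cancel, exp_zero]
      _ ≤ M * m := mul_le_mul (hM x hx) hm (exp_pos _).le ((exp_pos _).le.trans (hM x hx))
  have hdiff : exp (φ z - φ x) ≤ M * m := by
    rw [sub_eq_add_neg, exp_add]
    exact mul_le_mul (hM z hz) hm (exp_pos _).le ((exp_pos _).le.trans (hM z hz))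
  calc exp (ε * φ z) = exp (ε * (φ z - φ x)) * exp (ε * φ x) := by rw [← exp_add]; ring_nf
    _ ≤ _ := by
      gcongr
      exact (exp_mul_le_max_one_exp hε0 hε1 _).trans (max_le hone hdiff)

end Polydisk

namespace Scal

variable {n : ℕ} {Ω : Set (Fin n → ℂ)} {φ f : (Fin n → ℂ) → ℝ} {ε : ℝ}

/-- The function `f e^{εφ}`, whose logarithm `log f + εφ` is plurisubharmonic when
`f ∈ 𝒮_ε(φ)`; it is cut off outside the closed polydisk, where `f` need not be measurable. -/
def weight (φ f : (Fin n → ℂ) → ℝ) (ε : ℝ) (z : Fin n → ℂ) : ℝ≥0∞ :=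
  ENNReal.ofReal ((closedPolydisk n).indicator (fun z => f z * exp (ε * φ z)) z)

lemma weight_of_mem {z : Fin n → ℂ} (hz : z ∈ closedPolydisk n) :
    weight φ f ε z = ENNReal.ofReal (f z * exp (ε * φ z)) := by
  rw [weight, indicator_of_mem hz]

lemma measurable_indicator_mul_exp (hf : UpperSemicontinuousOn f (closedPolydisk n))
    (hφ : ContinuousOn φ (closedPolydisk n)) :
    Measurable ((closedPolydisk n).indicator fun z => f z * exp (ε * φ z)) := by
  have hCP : MeasurableSet (closedPolydisk n) :=
    closedPolydisk_eq_closedBall (n := n) ▸ measurableSet_closedBall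
  have hsplit : (closedPolydisk n).indicator (fun z => f z * exp (ε * φ z)) =
      fun z => (closedPolydisk n).indicator f z * exp (ε * (closedPolydisk n).indicator φ z) := by
    ext z
    by_cases hz : z ∈ closedPolydisk n <;> simp [hz]
  rw [hsplit]
  exact (hf.measurable_indicator hCP).mul
    ((hφ.upperSemicontinuousOn.measurable_indicator hCP).const_mul ε).exp

lemma measurable_weight (hf : UpperSemicontinuousOn f (closedPolydisk n))
    (hφ : ContinuousOn φ (closedPolydisk n)) : Measurable (weight φ f ε) :=
  ENNReal.measurable_ofReal.comp (measurable_indicator_mul_exp hf hφ)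

lemma ofReal_two_pi_mul_weight_le_lintegral_circle (hΩ : closedPolydisk n ⊆ Ω)
    (hφ : ContinuousOn φ Ω) (hf : f ∈ Scal Ω φ ε) {z : Fin n → ℂ} (hz : z ∈ closedPolydisk n)
    (i : Fin n) {ρ : ℝ} (hρ : 0 < ρ) (hzρ : ‖z i‖ + ρ ≤ 1) :
    ENNReal.ofReal (2 * π) * weight φ f ε z ≤ ∫⁻ θ in Ioc 0 (2 * π),
      weight φ f ε (Function.update z i (z i + ρ * Complex.exp (θ * Complex.I))) := by
  obtain ⟨hf0, hfusc, hpsh, -⟩ := hf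
  set F : (Fin n → ℂ) → ℝ := fun z => f z * exp (ε * φ z)
  have hpshF : IsPSHOn Ω fun z => elog (F z) := by simpa only [elog_add_coe] using hpsh
  have hdisc : ∀ l : ℂ, ‖l‖ ≤ ρ → Function.update z i (z i + l) ∈ closedPolydisk n := fun l hl =>
    update_add_mem_closedPolydisk hz (by linarith)
  have hcircle : ∀ θ : ℝ,
      Function.update z i (z i + ρ * Complex.exp (θ * Complex.I)) ∈ closedPolydisk n :=
    fun θ => hdisc _ (by simp [Complex.norm_exp_ofReal_mul_I, abs_of_pos hρ])
  have hF : ∀ θ : ℝ, F (z + ((ρ : ℂ) * Complex.exp (θ * Complex.I)) • Pi.single i 1) =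
      (closedPolydisk n).indicator F
        (Function.update z i (z i + ρ * Complex.exp (θ * Complex.I))) :=
    fun θ => by rw [add_smul_single_one_eq_update, indicator_of_mem (hcircle θ)]
  have hmeas : Measurable fun θ : ℝ =>
      F (z + ((ρ : ℂ) * Complex.exp (θ * Complex.I)) • Pi.single i 1) := by
    simp only [hF]
    exact (measurable_indicator_mul_exp (hfusc.mono hΩ) (hφ.mono hΩ)).comp (by fun_prop)
  have key := hpshF.ofReal_two_pi_mul_le_lintegral_circle
    (fun z => mul_nonneg (hf0 z) (exp_pos _).le) hρ
    (fun l hl => by rw [add_smul_single_one_eq_update]; exact hΩ (hdisc l hl)) hmeas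
  simp only [hF] at key
  rwa [weight_of_mem hz, ← ENNReal.ofReal_mul two_pi_pos.le]

lemma ofReal_mul_weight_le_setLIntegral_ball (hΩ : closedPolydisk n ⊆ Ω)
    (hφ : ContinuousOn φ Ω) (hf : f ∈ Scal Ω φ ε) {r : ℝ} (hr : 0 ≤ r) {z : Fin n → ℂ}
    {i : Fin n} (hzi : ‖z i‖ ≤ 1 - r) :
    ENNReal.ofReal (π * r ^ 2) * weight φ f ε z ≤
      ∫⁻ l in Metric.ball (z i) r, weight φ f ε (Function.update z i l) := by
  by_cases hz : z ∈ closedPolydisk n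
  swap
  · rw [weight, indicator_of_notMem hz, ENNReal.ofReal_zero, mul_zero]
    exact zero_le
  have hdisk := ofReal_mul_le_setLIntegral_ball
    (G := fun l => weight φ f ε (Function.update z i l)) (w := z i)
    ((measurable_weight (hf.2.1.mono hΩ) (hφ.mono hΩ)).comp (measurable_update z)) hr
    fun ρ hρ => by
      simpa only [Function.update_eq_self] using
        ofReal_two_pi_mul_weight_le_lintegral_circle hΩ hφ hf hz i hρ.1 (by linarith [hρ.2])
  rwa [Function.update_eq_self] at hdisk

lemma setLIntegral_ball_weight_le (hφ : ContinuousOn φ (closedPolydisk n))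
    (hf : f ∈ Scal Ω φ ε) (hε0 : 0 ≤ ε) (hε1 : ε ≤ 1) {r : ℝ} (hr : 0 < r) {x : Fin n → ℂ}
    (hx : ‖x‖ ≤ 1 - r) :
    ∫⁻ z in Metric.ball x r, weight φ f ε z ≤ ENNReal.ofReal
      (sSup ((fun z => exp (φ z)) '' closedPolydisk n) *
        sSup ((fun z => exp (-(φ z))) '' closedPolydisk n) * exp (ε * φ x)) := by
  set C := sSup ((fun z => exp (φ z)) '' closedPolydisk n) *
    sSup ((fun z => exp (-(φ z))) '' closedPolydisk n) * exp (ε * φ x)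
  have hball : Metric.ball x r ⊆ openPolydisk n := by
    rw [openPolydisk_eq_ball]
    exact Metric.ball_subset_ball' (by rwa [dist_zero_right, ← le_sub_iff_add_le'])
  have hxCP : x ∈ closedPolydisk n :=
    openPolydisk_subset_closedPolydisk (hball (Metric.mem_ball_self hr))
  calc ∫⁻ z in Metric.ball x r, weight φ f ε z
      ≤ ∫⁻ z in Metric.ball x r, ENNReal.ofReal C * ENNReal.ofReal (f z) := by
        refine setLIntegral_mono' measurableSet_ball fun z hz => ?_
        have hzCP : z ∈ closedPolydisk n := openPolydisk_subset_closedPolydisk (hball hz)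
        rw [weight_of_mem hzCP, ← ENNReal.ofReal_mul' (hf.1 z), mul_comm C]
        gcongr
        · exact hf.1 z
        · exact exp_mul_le_sSup_mul_sSup_mul_exp hφ hε0 hε1 hxCP hzCP
    _ = ENNReal.ofReal C * ∫⁻ z in Metric.ball x r, ENNReal.ofReal (f z) :=
        lintegral_const_mul' _ _ ENNReal.ofReal_ne_top
    _ ≤ ENNReal.ofReal C * ∫⁻ z in openPolydisk n, ENNReal.ofReal (f z) := by
        gcongr ENNReal.ofReal C * ?_
        exact lintegral_mono_set hball
    _ ≤ ENNReal.ofReal C := mul_le_of_le_one_right' hf.2.2.2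

theorem ofReal_apply_le (hΩ : closedPolydisk n ⊆ Ω) (hφ : ContinuousOn φ Ω)
    (hε : ε ∈ Ioc 0 1) (hf : f ∈ Scal Ω φ ε) {r : ℝ} (hr : r ∈ Ioo 0 1) {x : Fin n → ℂ}
    (hx : ∀ i, ‖x i‖ ≤ 1 - r) :
    ENNReal.ofReal (f x) ≤ ENNReal.ofReal (((π * r ^ 2) ^ n)⁻¹ *
      sSup ((fun z => exp (φ z)) '' closedPolydisk n) *
      sSup ((fun z => exp (-(φ z))) '' closedPolydisk n)) := by
  set M := sSup ((fun z => exp (φ z)) '' closedPolydisk n)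
  set m := sSup ((fun z => exp (-(φ z))) '' closedPolydisk n)
  have hxnorm : ‖x‖ ≤ 1 - r := (pi_norm_le_iff_of_nonneg (by linarith [hr.2])).2 hx
  have hxCP : x ∈ closedPolydisk n := fun i => (hx i).trans (by linarith [hr.1])
  have hsubmean : ENNReal.ofReal ((π * r ^ 2) ^ n) * weight φ f ε x ≤
      ∫⁻ z in Metric.ball x r, weight φ f ε z := by
    have := prod_mul_le_setLIntegral_pi (μ := fun _ => volume)
      (measurable_weight (hf.2.1.mono hΩ) (hφ.mono hΩ)) (fun i => Metric.ball (x i) r)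
      (fun _ => ENNReal.ofReal (π * r ^ 2)) (x := x) fun i z hzx => by
        have hdisk := ofReal_mul_weight_le_setLIntegral_ball hΩ hφ hf hr.1.le (i := i)
          (z := z) (by rw [hzx]; exact hx i)
        rwa [hzx] at hdisk
    rwa [Finset.prod_const, Finset.card_univ, Fintype.card_fin,
      ← ENNReal.ofReal_pow (by positivity), ← ball_pi x hr.1, ← volume_pi] at this
  have hbound := hsubmean.trans
    (setLIntegral_ball_weight_le (hφ.mono hΩ) hf hε.1.le hε.2 hr.1 hxnorm)
  have hM : 0 < M :=
    (exp_pos _).trans_le (exp_le_sSup_image isCompact_closedPolydisk (hφ.mono hΩ) hxCP)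
  have hm : 0 < m :=
    (exp_pos _).trans_le (exp_le_sSup_image isCompact_closedPolydisk (hφ.mono hΩ).neg hxCP)
  rw [weight_of_mem hxCP, ← ENNReal.ofReal_mul (by positivity),
    ENNReal.ofReal_le_ofReal_iff (mul_pos (mul_pos hM hm) (exp_pos _)).le] at hbound
  refine ENNReal.ofReal_le_ofReal ?_
  rw [mul_assoc, le_inv_mul_iff₀ (pow_pos (mul_pos pi_pos (pow_pos hr.1 2)) n)]
  exact le_of_mul_le_mul_right (by linarith) (exp_pos (ε * φ x))

end Scal

lemma exists_sub_le_of_isCompact_subset_openPolydisk {n : ℕ} {K : Set (Fin n → ℂ)}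
    (hK : IsCompact K) (hKsub : K ⊆ openPolydisk n) :
    ∃ r ∈ Ioo (0 : ℝ) 1, ∀ x ∈ K, ∀ i, ‖x i‖ ≤ 1 - r := by
  obtain ⟨R, hR, hKR⟩ := exists_pos_lt_subset_ball one_pos hK.isClosed
    (openPolydisk_eq_ball ▸ hKsub)
  refine ⟨1 - R, ⟨by linarith [hR.2], by linarith [hR.1]⟩, fun x hx i => ?_⟩
  have hxR : ‖x‖ < R := mem_ball_zero_iff.1 (hKR hx)
  linarith [norm_le_pi_norm x i]

theorem uniform_upper_estimate_general (n : ℕ) (Ω : Set (Fin n → ℂ))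
    (hΩ' : closedPolydisk n ⊆ Ω)
    (φ : (Fin n → ℂ) → ℝ) (hφc : ContinuousOn φ Ω) :
    (∀ r : ℝ, r ∈ Set.Ioo (0 : ℝ) 1 → ∀ ε : ℝ, ε ∈ Set.Ioc (0 : ℝ) 1 →
      ∀ x ∈ openPolydisk n, (∀ i, ‖x i‖ ≤ 1 - r) →
      Venv Ω φ ε x ≤ ENNReal.ofReal
        (((Real.pi * r ^ 2) ^ n)⁻¹ *
          sSup ((fun z => Real.exp (φ z)) '' closedPolydisk n) *
          sSup ((fun z => Real.exp (-(φ z))) '' closedPolydisk n))) ∧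
    (∀ K : Set (Fin n → ℂ), IsCompact K → K ⊆ openPolydisk n →
      ∃ C : ℝ≥0∞, C ≠ ⊤ ∧ ∀ ε : ℝ, ε ∈ Set.Ioc (0 : ℝ) 1 →
        ∀ x ∈ K, Venv Ω φ ε x ≤ C) := by
  have hbound : ∀ r ∈ Ioo (0 : ℝ) 1, ∀ ε ∈ Ioc (0 : ℝ) 1, ∀ x : Fin n → ℂ,
      (∀ i, ‖x i‖ ≤ 1 - r) → Venv Ω φ ε x ≤ ENNReal.ofReal (((π * r ^ 2) ^ n)⁻¹ *
        sSup ((fun z => exp (φ z)) '' closedPolydisk n) *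
        sSup ((fun z => exp (-(φ z))) '' closedPolydisk n)) := fun r hr ε hε x hx =>
    iSup₂_le fun f hf => Scal.ofReal_apply_le hΩ' hφc hε hf hr hx
  refine ⟨fun r hr ε hε x _ hx => hbound r hr ε hε x hx, fun K hK hKsub => ?_⟩
  obtain ⟨r, hr, hKr⟩ := exists_sub_le_of_isCompact_subset_openPolydisk hK hKsub
  exact ⟨_, ENNReal.ofReal_ne_top, fun ε hε x hx => hbound r hr ε hε x (hKr x hx)⟩

/-- Lemma 2.1, local form (uniform upper estimate): for `r ∈ (0,1)`, `ε ∈ (0,1]` and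
`x ∈ Δⁿ` with all `|x_i| ≤ 1 - r`, one has
`V_ε^φ(x) ≤ (π r²)^{-n} · (sup_{closed Δⁿ} e^{φ}) · (sup_{closed Δⁿ} e^{-φ})`; in
particular the envelopes are bounded on compacts of `Δⁿ`, uniformly in `ε ∈ (0,1]`. -/
theorem uniform_upper_estimate (n : ℕ) (Ω : Set (Fin n → ℂ)) (hΩ : IsOpen Ω)
    (hΩ' : closedPolydisk n ⊆ Ω)
    (φ : (Fin n → ℂ) → ℝ) (hφc : ContinuousOn φ Ω)
    (hφpsh : IsPSHOn Ω (fun z => ((φ z : ℝ) : EReal))) :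
    (∀ r : ℝ, r ∈ Set.Ioo (0 : ℝ) 1 → ∀ ε : ℝ, ε ∈ Set.Ioc (0 : ℝ) 1 →
      ∀ x ∈ openPolydisk n, (∀ i, ‖x i‖ ≤ 1 - r) →
      Venv Ω φ ε x ≤ ENNReal.ofReal
        (((Real.pi * r ^ 2) ^ n)⁻¹ *
          sSup ((fun z => Real.exp (φ z)) '' closedPolydisk n) *
          sSup ((fun z => Real.exp (-(φ z))) '' closedPolydisk n))) ∧
    (∀ K : Set (Fin n → ℂ), IsCompact K → K ⊆ openPolydisk n →
      ∃ C : ℝ≥0∞, C ≠ ⊤ ∧ ∀ ε : ℝ, ε ∈ Set.Ioc (0 : ℝ) 1 →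
        ∀ x ∈ K, Venv Ω φ ε x ≤ C) :=
  uniform_upper_estimate_general n Ω hΩ' φ hφc
end
end

section
/- Let Λ = ℤⁿ + iℤⁿ ⊂ ℂⁿ and D = [0,1)ⁿ + i[0,1)ⁿ. For ε > 0 let A_ε be the set of Λ-periodic upper semicontinuous ψ : ℂⁿ → [−∞, ∞) such that z ↦ ψ(z) + ε|z|² is plurisubharmonic on ℂⁿ and ∫_D e^{ψ} dλ = 1, and define dV_ε(x) = sup{e^{ψ(x)} : ψ ∈ A_ε}. Then the function x ↦ inf_{ε ∈ (0,1]} dV_ε(x) is a constant function on ℂⁿ whose value c satisfies 1 ≤ c ≤ C, where C is a constant depending only on n. In particular the limit 'canonical volume density' for the torus is a well-defined positive constant. -/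
open MeasureTheory Set
open scoped ENNReal NNReal

noncomputable section

/-- `ψ` is periodic with respect to the lattice `Λ = ℤⁿ + iℤⁿ ⊂ ℂⁿ`. -/
def LambdaPeriodic {n : ℕ} (ψ : (Fin n → ℂ) → EReal) : Prop :=
  ∀ z : Fin n → ℂ, ∀ k l : Fin n → ℤ,
    ψ (fun i => z i + (k i : ℂ) + (l i : ℂ) * Complex.I) = ψ z

/-- The fundamental domain `D = [0,1)ⁿ + i[0,1)ⁿ` of the torus `ℂⁿ/Λ`. -/
def fundDomain (n : ℕ) : Set (Fin n → ℂ) :=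
  {z | ∀ i, (z i).re ∈ Set.Ico (0 : ℝ) 1 ∧ (z i).im ∈ Set.Ico (0 : ℝ) 1}

/-- The class `A_ε` of admissible weights on the torus `ℂⁿ/Λ`: `Λ`-periodic upper
semicontinuous `ψ` with `ψ(z) + ε|z|²` plurisubharmonic and `∫_D e^ψ dλ = 1`. -/
def Aset (n : ℕ) (ε : ℝ) : Set ((Fin n → ℂ) → EReal) :=
  {ψ | LambdaPeriodic ψ ∧ UpperSemicontinuous ψ ∧
    IsPSHOn Set.univ (fun z => ψ z + ((ε * ∑ i, Complex.normSq (z i) : ℝ) : EReal)) ∧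
    (∫⁻ z in fundDomain n, EReal.exp (ψ z)) = 1}

/-- The approximating canonical volume density `dV_ε(x) = sup{e^{ψ(x)} : ψ ∈ A_ε}`. -/
def dVeps (n : ℕ) (ε : ℝ) (x : Fin n → ℂ) : ℝ≥0∞ :=
  ⨆ ψ ∈ Aset n ε, EReal.exp (ψ x)

/-!
Translating an admissible weight by `t ∈ ℂⁿ` keeps it admissible: `ε (|z|² - |z - t|²)` is
pluriharmonic, and `∫_D e^ψ` is translation invariant for `Λ`-periodic `ψ`. Hence every `dV_ε`
is constant, and the weight `ψ = 0` gives `dV_ε ≥ 1`. For the upper bound take `ε = 1`: by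
Jensen's inequality `e^{ψ + |z|²}` satisfies the sub-mean value inequality on complex circles, and
averaging over the rotation-invariant unit polydisk `P` gives
`vol(P) e^{ψ(0)} ≤ ∫_P e^{ψ + |z|²} ≤ eⁿ ∫_P e^ψ ≤ eⁿ 4ⁿ`, because `P` is covered by `4ⁿ`
translates of `D`.
-/

/-- `erealToENNReal` is Mathlib's `EReal.toENNReal`. -/
lemma eintegral_def {α : Type*} [MeasurableSpace α] (μ : Measure α) (u : α → EReal) :
    eintegral μ u = ((∫⁻ x, (u x).toENNReal ∂μ : ℝ≥0∞) : EReal) - (∫⁻ x, (-u x).toENNReal ∂μ) :=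
  rfl

lemma EReal.toENNReal_add_coe_add_toENNReal_neg (x : EReal) (c : ℝ) :
    (x + c).toENNReal + (-x).toENNReal + ENNReal.ofReal (-c)
      = (-(x + c)).toENNReal + x.toENNReal + ENNReal.ofReal c := by
  induction x with
  | bot => simp
  | top => simp
  | coe t =>
    have hsum : ∀ a b c : ℝ, ENNReal.ofReal a + ENNReal.ofReal b + ENNReal.ofReal c
        = ENNReal.ofReal (max a 0 + max b 0 + max c 0) := by
      intro a b c
      rw [ENNReal.ofReal_add (by positivity) (by positivity),
        ENNReal.ofReal_add (by positivity) (by positivity)]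
      simp only [ENNReal.ofReal_max, ENNReal.ofReal_zero, max_zero]
    simp only [← EReal.coe_add, ← EReal.coe_neg, EReal.real_coe_toENNReal, hsum]
    congr 1
    linarith [max_zero_sub_max_neg_zero_eq_self (t + c), max_zero_sub_max_neg_zero_eq_self t,
      max_zero_sub_max_neg_zero_eq_self c]

/-- The bookkeeping behind `eintegral_add_real`: `P, N` are the integrals of the positive and
negative parts of `f`, `P', N'` those of `f + h`, and `Hp, Hn` those of the real function `h`. -/
lemma EReal.coe_sub_coe_eq_of_balance {P N P' N' Hp Hn : ℝ≥0∞} (hHp : Hp ≠ ⊤) (hHn : Hn ≠ ⊤)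
    (hP' : P' ≤ P + Hp) (hP : P ≤ P' + Hn) (hN' : N' ≤ N + Hn) (hN : N ≤ N' + Hp)
    (hbal : P' + N + Hn = N' + P + Hp) :
    (P' : EReal) - N' = (P - N) + ((Hp.toReal - Hn.toReal : ℝ) : EReal) := by
  have top_iff {X Y A B : ℝ≥0∞} (hA : A ≠ ⊤) (hB : B ≠ ⊤) (hXY : X ≤ Y + A) (hYX : Y ≤ X + B) :
      X = ⊤ ↔ Y = ⊤ :=
    ⟨fun h => by simpa [h, hA] using hXY, fun h => by simpa [h, hB] using hYX⟩
  have hPP := top_iff hHn hHp hP hP'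
  have hNN := top_iff hHp hHn hN hN'
  by_cases hPt : P = ⊤ <;> by_cases hNt : N = ⊤
  · simp [hPt, hNt, hPP.mp hPt, hNN.mp hNt]
  · rw [hPt, hPP.mp hPt, ← EReal.coe_ennreal_toReal hNt,
      ← EReal.coe_ennreal_toReal (mt hNN.mpr hNt)]
    simp [-EReal.coe_sub]
  · rw [hNt, hNN.mp hNt, ← EReal.coe_ennreal_toReal hPt,
      ← EReal.coe_ennreal_toReal (mt hPP.mpr hPt)]
    simp
  · have hP't : P' ≠ ⊤ := mt hPP.mpr hPt
    have hN't : N' ≠ ⊤ := mt hNN.mpr hNt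
    rw [← EReal.coe_ennreal_toReal hPt, ← EReal.coe_ennreal_toReal hNt,
      ← EReal.coe_ennreal_toReal hP't, ← EReal.coe_ennreal_toReal hN't]
    have := congrArg ENNReal.toReal hbal
    rw [ENNReal.toReal_add (by finiteness) hHn, ENNReal.toReal_add hP't hNt,
      ENNReal.toReal_add (by finiteness) hHp, ENNReal.toReal_add hN't hPt] at this
    norm_cast
    linarith

lemma EReal.toENNReal_add_coe_le (x : EReal) (c : ℝ) :
    (x + c).toENNReal ≤ x.toENNReal + ENNReal.ofReal c := by
  simpa using EReal.toENNReal_add_le (x := x) (y := c)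

lemma EReal.neg_add_coe (x : EReal) (c : ℝ) : -(x + c) = -x + ((-c : ℝ) : EReal) := by
  rw [EReal.neg_add (Or.inr (EReal.coe_ne_top c)) (Or.inr (EReal.coe_ne_bot c)), EReal.coe_neg,
    sub_eq_add_neg]

lemma eintegral_add_real {α : Type*} [MeasurableSpace α] {μ : Measure α} {f : α → EReal}
    (hf : Measurable f) {h : α → ℝ} (hh : Integrable h μ) :
    eintegral μ (fun x => f x + h x) = eintegral μ f + ((∫ x, h x ∂μ : ℝ) : EReal) := by
  have hpos : AEMeasurable (fun x => ENNReal.ofReal (h x)) μ :=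
    hh.aemeasurable.ennreal_ofReal
  have hneg : AEMeasurable (fun x => ENNReal.ofReal (-h x)) μ :=
    hh.aemeasurable.neg.ennreal_ofReal
  rw [eintegral_def, eintegral_def, integral_eq_lintegral_pos_part_sub_lintegral_neg_part hh]
  refine EReal.coe_sub_coe_eq_of_balance hh.lintegral_lt_top.ne hh.neg.lintegral_lt_top.ne
    ?_ ?_ ?_ ?_ ?_
  · rw [← lintegral_add_right' _ hpos]
    exact lintegral_mono fun x => EReal.toENNReal_add_coe_le _ _
  · rw [← lintegral_add_right' _ hneg]
    refine lintegral_mono fun x => ?_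
    have hx : f x + h x + ((-h x : ℝ) : EReal) = f x := by
      rw [EReal.coe_neg, ← sub_eq_add_neg, EReal.add_sub_cancel_right]
    simpa only [hx] using EReal.toENNReal_add_coe_le (f x + h x) (-h x)
  · rw [← lintegral_add_right' _ hneg]
    refine lintegral_mono fun x => ?_
    simpa only [EReal.neg_add_coe] using EReal.toENNReal_add_coe_le (-f x) (-h x)
  · rw [← lintegral_add_right' _ hpos]
    refine lintegral_mono fun x => ?_
    have hx : -(f x + h x) + (h x : EReal) = -f x := by
      rw [EReal.neg_add_coe, EReal.coe_neg, ← sub_eq_add_neg, EReal.sub_add_cancel]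
    simpa only [hx] using EReal.toENNReal_add_coe_le (-(f x + h x)) (h x)
  · have hfpos : AEMeasurable (fun x => (f x).toENNReal) μ := hf.ereal_toENNReal.aemeasurable
    have hfneg : AEMeasurable (fun x => (-f x).toENNReal) μ := hf.neg.ereal_toENNReal.aemeasurable
    have := lintegral_congr (μ := μ) fun x =>
      EReal.toENNReal_add_coe_add_toENNReal_neg (f x) (h x)
    rwa [lintegral_add_right' _ hneg, lintegral_add_right' _ hfneg, lintegral_add_right' _ hpos,
      lintegral_add_right' _ hfpos] at this

lemma eintegral_smul_measure {α : Type*} [MeasurableSpace α] {c : ℝ≥0∞} (hc : c ≠ ⊤)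
    (μ : Measure α) (u : α → EReal) :
    eintegral (c • μ) u = (c : EReal) * eintegral μ u := by
  rw [eintegral_def, eintegral_def, lintegral_smul_measure, lintegral_smul_measure, smul_eq_mul,
    smul_eq_mul, EReal.coe_ennreal_mul, EReal.coe_ennreal_mul,
    EReal.mul_sub_of_nonneg_of_ne_top (EReal.coe_ennreal_nonneg c) (by simpa)]

lemma EReal.toENNReal_le_exp (x : EReal) : x.toENNReal ≤ EReal.exp x := by
  induction x with
  | bot => simp
  | top => simp
  | coe t =>
    rw [EReal.real_coe_toENNReal, EReal.exp_coe]
    exact ENNReal.ofReal_le_ofReal (by linarith [Real.add_one_le_exp t])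

lemma EReal.one_add_toENNReal_le_exp_add (x : EReal) :
    1 + x.toENNReal ≤ EReal.exp x + (-x).toENNReal := by
  induction x with
  | bot => simp
  | top => simp
  | coe t =>
    rw [← EReal.coe_neg, EReal.real_coe_toENNReal, EReal.real_coe_toENNReal, EReal.exp_coe]
    rcases le_total 0 t with ht | ht
    · rw [ENNReal.ofReal_of_nonpos (neg_nonpos.mpr ht), add_zero, ← ENNReal.ofReal_one,
        ← ENNReal.ofReal_add zero_le_one ht]
      exact ENNReal.ofReal_le_ofReal (by linarith [Real.add_one_le_exp t])
    · rw [ENNReal.ofReal_of_nonpos ht, add_zero, ← ENNReal.ofReal_add (Real.exp_nonneg t)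
        (neg_nonneg.mpr ht), ← ENNReal.ofReal_one]
      exact ENNReal.ofReal_le_ofReal (by linarith [Real.add_one_le_exp t])

lemma one_le_lintegral_exp_of_eintegral_eq_zero {α : Type*} [MeasurableSpace α] {μ : Measure α}
    [IsProbabilityMeasure μ] {g : α → EReal} (hg : Measurable g) (h0 : eintegral μ g = 0) :
    1 ≤ ∫⁻ x, EReal.exp (g x) ∂μ := by
  rw [eintegral_def] at h0
  set P := ∫⁻ x, (g x).toENNReal ∂μ
  set N := ∫⁻ x, (-g x).toENNReal ∂μ
  have hPt : P ≠ ⊤ := by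
    intro hP
    by_cases hN : N = ⊤ <;> simp_all [← EReal.coe_ennreal_toReal]
  have hNt : N ≠ ⊤ := by
    intro hN
    simp_all [← EReal.coe_ennreal_toReal]
  have hPN : P = N := by
    rw [← EReal.coe_ennreal_toReal hPt, ← EReal.coe_ennreal_toReal hNt, ← EReal.coe_sub,
      EReal.coe_eq_zero, sub_eq_zero] at h0
    exact (ENNReal.toReal_eq_toReal_iff' hPt hNt).mp h0
  have hint : 1 + P ≤ (∫⁻ x, EReal.exp (g x) ∂μ) + N := by
    calc 1 + P = ∫⁻ x, (1 + (g x).toENNReal) ∂μ := by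
          rw [lintegral_add_left measurable_const, lintegral_const, measure_univ, one_mul]
      _ ≤ ∫⁻ x, (EReal.exp (g x) + (-g x).toENNReal) ∂μ :=
          lintegral_mono fun x => EReal.one_add_toENNReal_le_exp_add (g x)
      _ = (∫⁻ x, EReal.exp (g x) ∂μ) + N :=
          lintegral_add_right _ hg.neg.ereal_toENNReal
  rw [hPN] at hint
  exact ENNReal.le_of_add_le_add_right hNt hint

lemma exp_eintegral_le_lintegral_exp {α : Type*} [MeasurableSpace α] {μ : Measure α}
    [IsProbabilityMeasure μ] {f : α → EReal} (hf : Measurable f) :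
    EReal.exp (eintegral μ f) ≤ ∫⁻ x, EReal.exp (f x) ∂μ := by
  induction hm : eintegral μ f with
  | bot => simp
  | top =>
    have hP : ∫⁻ x, (f x).toENNReal ∂μ = ⊤ := by
      by_contra hP
      rw [eintegral_def, ← EReal.coe_ennreal_toReal hP] at hm
      by_cases hN : ∫⁻ x, (-f x).toENNReal ∂μ = ⊤ <;>
        simp_all [← EReal.coe_ennreal_toReal, ← EReal.coe_sub]
    simpa [hP] using lintegral_mono (μ := μ) fun x => EReal.toENNReal_le_exp (f x)
  | coe m =>
    have hshift : ∀ x, f x + ((-m : ℝ) : EReal) + m = f x := fun x => by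
      rw [EReal.coe_neg, ← sub_eq_add_neg, EReal.sub_add_cancel]
    have hcenter : eintegral μ (fun x => f x + ((-m : ℝ) : EReal)) = 0 := by
      rw [eintegral_add_real hf (integrable_const (-m)), hm, integral_const, probReal_univ,
        one_smul, ← EReal.coe_add, add_neg_cancel, EReal.coe_zero]
    calc EReal.exp m = 1 * EReal.exp m := (one_mul _).symm
      _ ≤ (∫⁻ x, EReal.exp (f x + ((-m : ℝ) : EReal)) ∂μ) * EReal.exp m :=
          mul_le_mul_left (one_le_lintegral_exp_of_eintegral_eq_zero
            (hf.add measurable_const) hcenter) _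
      _ = ∫⁻ x, EReal.exp (f x) ∂μ := by
          rw [← lintegral_mul_const' _ _ (by simp)]
          simp only [← EReal.exp_add, hshift]

def circleMeasure : Measure ℝ :=
  ENNReal.ofReal (2 * Real.pi)⁻¹ • volume.restrict (Ioc 0 (2 * Real.pi))

instance : IsProbabilityMeasure circleMeasure := by
  constructor
  rw [circleMeasure, Measure.smul_apply, Measure.restrict_apply_univ, Real.volume_Ioc, sub_zero,
    smul_eq_mul, ← ENNReal.ofReal_mul (by positivity), inv_mul_cancel₀ (by positivity),
    ENNReal.ofReal_one]

lemma circleMean_eq_eintegral (u : ℝ → EReal) : circleMean u = eintegral circleMeasure u := by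
  rw [circleMeasure, eintegral_smul_measure ENNReal.ofReal_ne_top, EReal.coe_ennreal_ofReal,
    max_eq_left (by positivity)]
  rfl

lemma circleMean_zero : circleMean (fun _ => 0) = 0 := by
  simp [circleMean_eq_eintegral, eintegral_def]

lemma Continuous.integrable_circleMeasure {h : ℝ → ℝ} (hh : Continuous h) :
    Integrable h circleMeasure :=
  hh.integrableOn_Ioc.smul_measure ENNReal.ofReal_ne_top

lemma circleMean_add_real {f : ℝ → EReal} (hf : Measurable f) {h : ℝ → ℝ} (hh : Continuous h) :
    circleMean (fun θ => f θ + h θ) = circleMean f + ((∫ θ, h θ ∂circleMeasure : ℝ) : EReal) := by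
  simp only [circleMean_eq_eintegral, eintegral_add_real hf hh.integrable_circleMeasure]

lemma integral_circleMeasure_trig (c α β : ℝ) :
    ∫ θ, c + (α * Real.cos θ + β * Real.sin θ) ∂circleMeasure = c := by
  have hcos : IntervalIntegrable (fun θ => α * Real.cos θ) volume 0 (2 * Real.pi) :=
    (continuous_const.mul Real.continuous_cos).intervalIntegrable _ _
  have hsin : IntervalIntegrable (fun θ => β * Real.sin θ) volume 0 (2 * Real.pi) :=
    (continuous_const.mul Real.continuous_sin).intervalIntegrable _ _
  rw [circleMeasure, integral_smul_measure, ← intervalIntegral.integral_of_le (by positivity),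
    intervalIntegral.integral_add intervalIntegrable_const (hcos.add hsin),
    intervalIntegral.integral_add hcos hsin, intervalIntegral.integral_const_mul,
    intervalIntegral.integral_const_mul, integral_cos, integral_sin, Real.sin_two_pi,
    Real.cos_two_pi, intervalIntegral.integral_const, ENNReal.toReal_ofReal (by positivity)]
  simp only [Real.sin_zero, Real.cos_zero, sub_zero, smul_eq_mul, sub_self, mul_zero, add_zero]
  field_simp

section Plurisubharmonic

variable {n : ℕ}

lemma isPSHOn_zero (Ω : Set (Fin n → ℂ)) : IsPSHOn Ω (fun _ => 0) :=
  ⟨upperSemicontinuous_const.upperSemicontinuousOn _, fun _ _ _ _ _ _ => circleMean_zero.ge⟩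

lemma IsPSHOn.comp_sub_const {Ω : Set (Fin n → ℂ)} {u : (Fin n → ℂ) → EReal} (hu : IsPSHOn Ω u)
    (t : Fin n → ℂ) : IsPSHOn ((· - t) ⁻¹' Ω) (fun z => u (z - t)) := by
  refine ⟨hu.1.comp (continuous_sub_right t).continuousOn (mapsTo_preimage _ _),
    fun a ha b r hr hΩ => ?_⟩
  simp_rw [← sub_add_eq_add_sub]
  exact hu.2 (a - t) ha b r hr fun l hl => by simpa [sub_add_eq_add_sub] using hΩ l hl

lemma IsPSHOn.add_real {Ω : Set (Fin n → ℂ)} {u : (Fin n → ℂ) → EReal} (hu : IsPSHOn Ω u)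
    {g : (Fin n → ℂ) → ℝ} (hg : Continuous g)
    (hmean : ∀ a b : Fin n → ℂ, ∀ r : ℝ,
      g a ≤ ∫ θ, g (a + ((r : ℂ) * Complex.exp (θ * Complex.I)) • b) ∂circleMeasure) :
    IsPSHOn Ω (fun z => u z + g z) := by
  refine ⟨hu.1.add' ((continuous_coe_real_ereal.comp hg).upperSemicontinuous.upperSemicontinuousOn
    Ω) fun z _ => EReal.continuousAt_add (Or.inr (EReal.coe_ne_bot _))
      (Or.inr (EReal.coe_ne_top _)), fun a ha b r hr hΩ => ?_⟩
  have hcircle : Continuous fun θ : ℝ => a + ((r : ℂ) * Complex.exp (θ * Complex.I)) • b := by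
    fun_prop
  have hmaps : MapsTo (fun θ : ℝ => a + ((r : ℂ) * Complex.exp (θ * Complex.I)) • b) univ Ω :=
    fun θ _ => hΩ _ (by simp [abs_of_pos hr])
  have hmeas : Measurable fun θ : ℝ => u (a + ((r : ℂ) * Complex.exp (θ * Complex.I)) • b) :=
    (upperSemicontinuousOn_univ_iff.mp (hu.1.comp hcircle.continuousOn hmaps)).measurable
  have hgc : Continuous fun θ : ℝ => g (a + ((r : ℂ) * Complex.exp (θ * Complex.I)) • b) :=
    hg.comp hcircle
  dsimp only
  rw [circleMean_add_real hmeas hgc]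
  exact add_le_add (hu.2 a ha b r hr hΩ) (EReal.coe_le_coe_iff.mpr (hmean a b r))

lemma IsPSHOn.measurable {u : (Fin n → ℂ) → EReal} (hu : IsPSHOn univ u) : Measurable u :=
  (upperSemicontinuousOn_univ_iff.mp hu.1).measurable

lemma IsPSHOn.exp_le_lintegral_exp_circle {u : (Fin n → ℂ) → EReal} (hu : IsPSHOn univ u)
    (a b : Fin n → ℂ) {r : ℝ} (hr : 0 < r) :
    EReal.exp (u a)
      ≤ ∫⁻ θ, EReal.exp (u (a + ((r : ℂ) * Complex.exp (θ * Complex.I)) • b)) ∂circleMeasure := by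
  refine EReal.exp_monotone (hu.2 a trivial b r hr fun _ _ => trivial) |>.trans ?_
  rw [circleMean_eq_eintegral]
  exact exp_eintegral_le_lintegral_exp (hu.measurable.comp (by fun_prop))

end Plurisubharmonic

section EuclidNormSq

variable {n : ℕ}

/-- `|z|²` on `ℂⁿ`; the `Pi` norm on `Fin n → ℂ` is the sup norm, so this is not `‖z‖ ^ 2`. -/
def euclidNormSq (z : Fin n → ℂ) : ℝ := ∑ i, Complex.normSq (z i)

@[fun_prop]
lemma continuous_euclidNormSq : Continuous (euclidNormSq (n := n)) := by
  unfold euclidNormSq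
  fun_prop

lemma euclidNormSq_add_smul (a b : Fin n → ℂ) (w : ℂ) :
    euclidNormSq (a + w • b) = euclidNormSq a + Complex.normSq w * euclidNormSq b
      + 2 * (w.re * (∑ i, a i * star (b i)).re + w.im * (∑ i, a i * star (b i)).im) := by
  simp only [euclidNormSq, Pi.add_apply, Pi.smul_apply, smul_eq_mul, Complex.normSq_add,
    Complex.normSq_mul, Finset.mul_sum, Complex.re_sum, Complex.im_sum,
    ← Finset.sum_add_distrib]
  refine Finset.sum_congr rfl fun i _ => ?_
  simp only [Complex.mul_re, Complex.mul_im, Complex.star_def, Complex.conj_re, Complex.conj_im,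
    map_mul]
  ring

lemma integral_euclidNormSq_circle (a b : Fin n → ℂ) (r : ℝ) :
    ∫ θ, euclidNormSq (a + ((r : ℂ) * Complex.exp (θ * Complex.I)) • b) ∂circleMeasure
      = euclidNormSq a + r ^ 2 * euclidNormSq b := by
  set S := ∑ i, a i * star (b i)
  have hcircle (θ : ℝ) :
      euclidNormSq (a + ((r : ℂ) * Complex.exp (θ * Complex.I)) • b) = euclidNormSq a
        + r ^ 2 * euclidNormSq b + (2 * r * S.re * Real.cos θ + 2 * r * S.im * Real.sin θ) := by
    rw [euclidNormSq_add_smul, Complex.normSq_mul, Complex.normSq_ofReal, Complex.re_ofReal_mul,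
      Complex.im_ofReal_mul, Complex.exp_ofReal_mul_I_re, Complex.exp_ofReal_mul_I_im,
      Complex.normSq_eq_norm_sq, Complex.norm_exp_ofReal_mul_I]
    ring
  simp_rw [hcircle]
  exact integral_circleMeasure_trig _ _ _

end EuclidNormSq

section Lattice

variable {n : ℕ}

/-- The real basis `(eⱼ, i eⱼ)` of `ℂⁿ`; its `ℤ`-span is `Λ`. -/
def latticeBasis (n : ℕ) : Module.Basis ((_ : Fin n) × Fin 2) ℝ (Fin n → ℂ) :=
  Pi.basis fun _ => Complex.basisOneI

lemma fundDomain_eq_zspan (n : ℕ) :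
    fundDomain n = ZSpan.fundamentalDomain (latticeBasis n) := by
  have hrepr (w : ℂ) (j : Fin 2) : Complex.basisOneI.repr w j = ![w.re, w.im] j :=
    congrFun (Complex.coe_basisOneI_repr w) j
  ext z
  simp only [fundDomain, mem_ofPred_eq, ZSpan.mem_fundamentalDomain, latticeBasis, Pi.basis_repr,
    hrepr, Sigma.forall, Fin.forall_fin_two]
  simp

lemma measurableSet_fundDomain (n : ℕ) : MeasurableSet (fundDomain n) := by
  rw [fundDomain_eq_zspan]
  exact ZSpan.fundamentalDomain_measurableSet _

lemma volume_fundDomain (n : ℕ) : volume (fundDomain n) = 1 := by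
  have hsquare : volume {w : ℂ | w.re ∈ Ico (0 : ℝ) 1 ∧ w.im ∈ Ico (0 : ℝ) 1} = 1 := by
    have : {w : ℂ | w.re ∈ Ico (0 : ℝ) 1 ∧ w.im ∈ Ico (0 : ℝ) 1}
        = Complex.measurableEquivRealProd ⁻¹' (Ico 0 1 ×ˢ Ico 0 1) := by
      ext w
      simp
    rw [this, Complex.volume_preserving_equiv_real_prod.measure_preimage
      (measurableSet_Ico.prod measurableSet_Ico).nullMeasurableSet, Measure.volume_eq_prod,
      Measure.prod_prod]
    simp
  have : fundDomain n = univ.pi fun _ => {w : ℂ | w.re ∈ Ico 0 1 ∧ w.im ∈ Ico 0 1} := by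
    ext z
    simp [fundDomain]
  rw [this, volume_pi_pi, hsquare, Finset.prod_const_one]

lemma LambdaPeriodic.apply_add_of_mem_span {ψ : (Fin n → ℂ) → EReal} (hψ : LambdaPeriodic ψ)
    {γ : Fin n → ℂ} (hγ : γ ∈ Submodule.span ℤ (range (latticeBasis n))) (z : Fin n → ℂ) :
    ψ (z + γ) = ψ z := by
  rw [← Submodule.mem_toAddSubgroup, Submodule.span_int_eq_addSubgroupClosure] at hγ
  induction hγ using AddSubgroup.closure_induction generalizing z with
  | mem γ hγ =>
    obtain ⟨⟨i, j⟩, rfl⟩ := hγ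
    fin_cases j
    · convert hψ z (Pi.single i 1) 0 using 2
      ext m
      rcases eq_or_ne m i with rfl | hm <;> simp [latticeBasis, *]
    · convert hψ z 0 (Pi.single i 1) using 2
      ext m
      rcases eq_or_ne m i with rfl | hm <;> simp [latticeBasis, *]
  | zero => rw [add_zero]
  | add γ δ _ _ hγ hδ => rw [← add_assoc, hδ, hγ]
  | neg γ _ hγ => rw [← hγ (z + -γ), neg_add_cancel_right]

lemma LambdaPeriodic.setLIntegral_preimage_add {ψ : (Fin n → ℂ) → EReal} (hψ : LambdaPeriodic ψ)
    (t : Fin n → ℂ) :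
    ∫⁻ z in (· + t) ⁻¹' fundDomain n, EReal.exp (ψ z) = ∫⁻ z in fundDomain n, EReal.exp (ψ z) := by
  let Γ := (Submodule.span ℤ (range (latticeBasis n))).toAddSubgroup
  have : Countable Γ := inferInstanceAs (Countable (Submodule.span ℤ (range (latticeBasis n))))
  have hD : IsAddFundamentalDomain Γ (fundDomain n) volume := by
    rw [fundDomain_eq_zspan]
    exact ZSpan.isAddFundamentalDomain' _ _
  have hDt : IsAddFundamentalDomain Γ ((· + t) ⁻¹' fundDomain n) volume :=
    hD.preimage_of_equiv (measurePreserving_add_right volume t).quasiMeasurePreserving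
      (e := id) Function.bijective_id fun γ z => add_assoc (γ : Fin n → ℂ) z t
  refine hDt.setLIntegral_eq hD _ fun γ z => ?_
  change EReal.exp (ψ (γ + z)) = EReal.exp (ψ z)
  rw [add_comm, hψ.apply_add_of_mem_span γ.2]

lemma LambdaPeriodic.setLIntegral_comp_sub {ψ : (Fin n → ℂ) → EReal} (hψ : LambdaPeriodic ψ)
    (hψm : Measurable ψ) (t : Fin n → ℂ) :
    ∫⁻ z in fundDomain n, EReal.exp (ψ (z - t)) = ∫⁻ z in fundDomain n, EReal.exp (ψ z) := by
  have hf : Measurable fun z => EReal.exp (ψ (z - t)) :=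
    EReal.measurable_exp.comp (hψm.comp (measurable_sub_const t))
  rw [← (measurePreserving_add_right volume t).setLIntegral_comp_preimage
    (measurableSet_fundDomain n) hf, ← hψ.setLIntegral_preimage_add t]
  simp_rw [add_sub_cancel_right]

end Lattice

section Admissible

variable {n : ℕ} {ε : ℝ}

lemma zero_mem_Aset (hε : 0 ≤ ε) : (fun _ => 0) ∈ Aset n ε := by
  refine ⟨fun _ _ _ => rfl, upperSemicontinuous_const,
    (isPSHOn_zero univ).add_real (g := fun z => ε * euclidNormSq z) (by fun_prop)
      fun a b r => ?_, by simp [volume_fundDomain]⟩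
  rw [integral_const_mul, integral_euclidNormSq_circle]
  have : 0 ≤ r ^ 2 * euclidNormSq b :=
    mul_nonneg (sq_nonneg r) (Finset.sum_nonneg fun i _ => Complex.normSq_nonneg _)
  exact mul_le_mul_of_nonneg_left (le_add_of_nonneg_right this) hε

/-- `Aset n ε` is invariant under translations: `ψ(· - t) + ε|·|²` differs from the translate of
`ψ + ε|·|²` by the pluriharmonic function `ε (|z|² - |z - t|²)`. -/
lemma comp_sub_mem_Aset {ψ : (Fin n → ℂ) → EReal} (hψ : ψ ∈ Aset n ε) (t : Fin n → ℂ) :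
    (fun z => ψ (z - t)) ∈ Aset n ε := by
  obtain ⟨hper, husc, hpsh, hnorm⟩ := hψ
  refine ⟨fun z k l => ?_, husc.comp (continuous_sub_right t), ?_, ?_⟩
  · convert hper (z - t) k l using 2
    ext i
    simp only [Pi.sub_apply]
    ring
  · have hsum := (hpsh.comp_sub_const t).add_real
      (g := fun z => ε * (euclidNormSq z - euclidNormSq (z - t))) (by fun_prop) fun a b r => ?_
    · rw [preimage_univ] at hsum
      convert hsum using 2 with z
      rw [add_assoc, ← EReal.coe_add]
      congr 2
      unfold euclidNormSq
      ring
    · simp_rw [← sub_add_eq_add_sub]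
      rw [integral_const_mul, integral_sub (Continuous.integrable_circleMeasure (by fun_prop))
        (Continuous.integrable_circleMeasure (by fun_prop)), integral_euclidNormSq_circle,
        integral_euclidNormSq_circle]
      apply le_of_eq
      ring
  · rw [hper.setLIntegral_comp_sub husc.measurable, hnorm]

lemma dVeps_eq (x y : Fin n → ℂ) : dVeps n ε x = dVeps n ε y := by
  suffices h : ∀ x y, dVeps n ε x ≤ dVeps n ε y from le_antisymm (h x y) (h y x)
  intro x y
  refine iSup₂_le fun ψ hψ => ?_
  simpa [dVeps] using le_iSup₂ (f := fun ψ (_ : ψ ∈ Aset n ε) => EReal.exp (ψ y)) _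
    (comp_sub_mem_Aset hψ (y - x))

lemma one_le_dVeps (hε : 0 ≤ ε) (x : Fin n → ℂ) : 1 ≤ dVeps n ε x := by
  simpa [dVeps] using le_iSup₂ (f := fun ψ (_ : ψ ∈ Aset n ε) => EReal.exp (ψ x)) _ (zero_mem_Aset hε)

end Admissible

section Polydisk

variable {n : ℕ}

lemma openPolydisk_eq_pi (n : ℕ) : openPolydisk n = univ.pi fun _ => Metric.ball (0 : ℂ) 1 := by
  ext z
  simp [openPolydisk]

lemma isOpen_openPolydisk (n : ℕ) : IsOpen (openPolydisk n) := by
  rw [openPolydisk_eq_pi]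
  exact isOpen_set_pi finite_univ fun _ _ => Metric.isOpen_ball

lemma volume_openPolydisk_pos (n : ℕ) : 0 < volume (openPolydisk n) :=
  (isOpen_openPolydisk n).measure_pos volume ⟨0, fun i => by simp⟩

lemma volume_openPolydisk_ne_top (n : ℕ) : volume (openPolydisk n) ≠ ⊤ := by
  rw [openPolydisk_eq_pi, volume_pi_pi]
  exact (ENNReal.prod_lt_top fun _ _ => measure_ball_lt_top).ne

lemma measurePreserving_circle_smul (c : Circle) :
    MeasurePreserving (fun z : Fin n → ℂ => (c : ℂ) • z) := by
  exact measurePreserving_pi (fun _ : Fin n => (volume : Measure ℂ))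
    (fun _ => volume) fun _ => (rotation c).measurePreserving

lemma setLIntegral_openPolydisk_circle_smul (c : Circle) {F : (Fin n → ℂ) → ℝ≥0∞}
    (hF : Measurable F) :
    ∫⁻ z in openPolydisk n, F ((c : ℂ) • z) = ∫⁻ z in openPolydisk n, F z := by
  have hpre : (fun z : Fin n → ℂ => (c : ℂ) • z) ⁻¹' openPolydisk n = openPolydisk n := by
    ext z
    simp [openPolydisk, Circle.norm_coe]
  rw [← (measurePreserving_circle_smul c).setLIntegral_comp_preimage
    (isOpen_openPolydisk n).measurableSet hF, hpre]

/-- Average the circle inequality for `e^u` over the rotation-invariant polydisk. -/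
lemma IsPSHOn.volume_mul_exp_le_setLIntegral_openPolydisk {u : (Fin n → ℂ) → EReal}
    (hu : IsPSHOn univ u) :
    volume (openPolydisk n) * EReal.exp (u 0) ≤ ∫⁻ z in openPolydisk n, EReal.exp (u z) := by
  have hF : Measurable fun z => EReal.exp (u z) := EReal.measurable_exp.comp hu.measurable
  have hcircle (b : Fin n → ℂ) :
      EReal.exp (u 0) ≤ ∫⁻ θ, EReal.exp (u ((Circle.exp θ : ℂ) • b)) ∂circleMeasure := by
    simpa [Circle.coe_exp] using hu.exp_le_lintegral_exp_circle 0 b one_pos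
  calc volume (openPolydisk n) * EReal.exp (u 0)
      = ∫⁻ _ in openPolydisk n, EReal.exp (u 0) := by rw [setLIntegral_const, mul_comm]
    _ ≤ ∫⁻ b in openPolydisk n, ∫⁻ θ, EReal.exp (u ((Circle.exp θ : ℂ) • b)) ∂circleMeasure :=
        lintegral_mono hcircle
    _ = ∫⁻ θ, (∫⁻ b in openPolydisk n, EReal.exp (u ((Circle.exp θ : ℂ) • b))) ∂circleMeasure :=
        lintegral_lintegral_swap (hF.comp (by fun_prop :
          Continuous fun p : (Fin n → ℂ) × ℝ => (Circle.exp p.2 : ℂ) • p.1).measurable).aemeasurable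
    _ = ∫⁻ z in openPolydisk n, EReal.exp (u z) := by
        simp_rw [setLIntegral_openPolydisk_circle_smul _ hF, lintegral_const, measure_univ,
          mul_one]

/-- The polydisk is covered by the `4ⁿ` translates `D - k - l i`, `k, l ∈ {0, 1}ⁿ`. -/
lemma LambdaPeriodic.setLIntegral_openPolydisk_le {ψ : (Fin n → ℂ) → EReal}
    (hψ : LambdaPeriodic ψ) :
    ∫⁻ z in openPolydisk n, EReal.exp (ψ z) ≤ 4 ^ n * ∫⁻ z in fundDomain n, EReal.exp (ψ z) := by
  let shift (v : Fin n → Bool × Bool) : Fin n → ℂ := fun i =>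
    (if (v i).1 then 1 else 0 : ℂ) + (if (v i).2 then 1 else 0 : ℂ) * Complex.I
  have hunit {x : ℝ} (hx : |x| < 1) : x + (if x < 0 then 1 else 0) ∈ Ico (0 : ℝ) 1 := by
    rw [abs_lt] at hx
    split_ifs <;> constructor <;> linarith
  have hcover : openPolydisk n ⊆ ⋃ v, (· + shift v) ⁻¹' fundDomain n := by
    intro z hz
    refine mem_iUnion.mpr ⟨fun i => (decide ((z i).re < 0), decide ((z i).im < 0)), fun i => ?_⟩
    have hre := hunit ((Complex.abs_re_le_norm (z i)).trans_lt (hz i))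
    have him := hunit ((Complex.abs_im_le_norm (z i)).trans_lt (hz i))
    simpa [shift, apply_ite Complex.re, apply_ite Complex.im] using ⟨hre, him⟩
  calc ∫⁻ z in openPolydisk n, EReal.exp (ψ z)
      ≤ ∫⁻ z in ⋃ v, (· + shift v) ⁻¹' fundDomain n, EReal.exp (ψ z) := lintegral_mono_set hcover
    _ ≤ ∑' v, ∫⁻ z in (· + shift v) ⁻¹' fundDomain n, EReal.exp (ψ z) := lintegral_iUnion_le _ _
    _ = 4 ^ n * ∫⁻ z in fundDomain n, EReal.exp (ψ z) := by
        simp_rw [hψ.setLIntegral_preimage_add, tsum_fintype, Finset.sum_const, Finset.card_univ]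
        simp

end Polydisk

lemma volume_mul_exp_le_of_mem_Aset_one {n : ℕ} {ψ : (Fin n → ℂ) → EReal} (hψ : ψ ∈ Aset n 1) :
    volume (openPolydisk n) * EReal.exp (ψ 0) ≤ ENNReal.ofReal (Real.exp n) * 4 ^ n := by
  obtain ⟨hper, -, hpsh, hnorm⟩ := hψ
  have hweight : ∀ z ∈ openPolydisk n, EReal.exp (ψ z + ((1 * euclidNormSq z : ℝ) : EReal))
      ≤ ENNReal.ofReal (Real.exp n) * EReal.exp (ψ z) := by
    intro z hz
    rw [EReal.exp_add, EReal.exp_coe, mul_comm, one_mul]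
    gcongr
    calc euclidNormSq z ≤ ∑ _i : Fin n, (1 : ℝ) := Finset.sum_le_sum fun i _ => by
          rw [Complex.normSq_eq_norm_sq]
          nlinarith [norm_nonneg (z i), hz i]
      _ = n := by simp
  calc volume (openPolydisk n) * EReal.exp (ψ 0)
      = volume (openPolydisk n) * EReal.exp (ψ 0 + ((1 * euclidNormSq 0 : ℝ) : EReal)) := by
        simp [euclidNormSq]
    _ ≤ ∫⁻ z in openPolydisk n, EReal.exp (ψ z + ((1 * euclidNormSq z : ℝ) : EReal)) :=
        hpsh.volume_mul_exp_le_setLIntegral_openPolydisk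
    _ ≤ ∫⁻ z in openPolydisk n, ENNReal.ofReal (Real.exp n) * EReal.exp (ψ z) :=
        setLIntegral_mono' (isOpen_openPolydisk n).measurableSet hweight
    _ ≤ ENNReal.ofReal (Real.exp n) * (4 ^ n * ∫⁻ z in fundDomain n, EReal.exp (ψ z)) := by
        rw [lintegral_const_mul' _ _ ENNReal.ofReal_ne_top]
        gcongr
        exact hper.setLIntegral_openPolydisk_le
    _ = ENNReal.ofReal (Real.exp n) * 4 ^ n := by rw [hnorm, mul_one]

lemma dVeps_one_le {n : ℕ} (x : Fin n → ℂ) :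
    dVeps n 1 x ≤ (volume (openPolydisk n))⁻¹ * (ENNReal.ofReal (Real.exp n) * 4 ^ n) := by
  rw [dVeps_eq x 0, ← ENNReal.div_eq_inv_mul]
  refine iSup₂_le fun ψ hψ => ?_
  rw [ENNReal.le_div_iff_mul_le (Or.inl (volume_openPolydisk_pos n).ne')
    (Or.inl (volume_openPolydisk_ne_top n)), mul_comm]
  exact volume_mul_exp_le_of_mem_Aset_one hψ

/-- Theorem 1.1 for the torus `ℂⁿ/Λ`: the limit canonical volume density
`x ↦ inf_{ε ∈ (0,1]} dV_ε(x)` is a constant `c` with `1 ≤ c ≤ C`, where `C < ∞`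
depends only on `n`; in particular it is a well-defined positive finite constant. -/
theorem torus_canonical_density (n : ℕ) :
    ∃ c C : ℝ≥0∞, C ≠ ⊤ ∧
      (∀ x : Fin n → ℂ, (⨅ ε ∈ Set.Ioc (0 : ℝ) 1, dVeps n ε x) = c) ∧
      1 ≤ c ∧ c ≤ C := by
  refine ⟨⨅ ε ∈ Ioc (0 : ℝ) 1, dVeps n ε 0,
    (volume (openPolydisk n))⁻¹ * (ENNReal.ofReal (Real.exp n) * 4 ^ n), ?_, fun x => ?_,
    le_iInf₂ fun ε hε => one_le_dVeps hε.1.le 0,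
    (biInf_le _ (right_mem_Ioc.mpr one_pos)).trans (dVeps_one_le 0)⟩
  · exact ENNReal.mul_ne_top (ENNReal.inv_ne_top.mpr (volume_openPolydisk_pos n).ne')
      (by finiteness)
  · simp_rw [dVeps_eq x 0]

end
end
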